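/- arXiv:2605.15125 — 6 statements merged into one kernel-verified Lean document; each statement's English description precedes it below -/
import Mathlib

section
/- The wheel graph W_6 is a minor of the line graph L(K_{3,3}) of the complete bipartite graph K_{3,3}. -/
open SimpleGraph

/-- `H` is a minor of `G`: disjoint connected branch sets in `G`, one per vertex of `H`,
with an edge of `G` between branch sets of adjacent vertices of `H`. -/
def SimpleGraph.IsMinorOf {V W : Type*} (H : SimpleGraph W) (G : SimpleGraph V) : Prop :=
  ∃ B : W → Set V,
    (∀ w, (G.induce (B w)).Connected) ∧
    (Pairwise fun w₁ w₂ => Disjoint (B w₁) (B w₂)) ∧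
    (∀ w₁ w₂, H.Adj w₁ w₂ → ∃ x ∈ B w₁, ∃ y ∈ B w₂, G.Adj x y)

/-- The wheel `W₆`: hub `0` joined to the 6-cycle `1-2-3-4-5-6-1`. -/
def W6 : SimpleGraph (Fin 7) := SimpleGraph.fromEdgeSet
  {s(0,1), s(0,2), s(0,3), s(0,4), s(0,5), s(0,6),
   s(1,2), s(2,3), s(3,4), s(4,5), s(5,6), s(6,1)}

/-- `V₈`: the 8-cycle (vertices `0,…,7` standing for `1,…,8`) plus the four diagonals. -/
def V8 : SimpleGraph (Fin 8) := SimpleGraph.fromEdgeSet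
  {s(0,1), s(1,2), s(2,3), s(3,4), s(4,5), s(5,6), s(6,7), s(7,0),
   s(0,4), s(1,5), s(2,6), s(3,7)}

/-- The line graph of `K_{3,3}`: vertices are the edges, adjacent iff they share an endpoint. -/
def lineGraphK33 : SimpleGraph (completeBipartiteGraph (Fin 3) (Fin 3)).edgeSet :=
  SimpleGraph.fromRel (fun e f => ∃ v, v ∈ (e : Sym2 (Fin 3 ⊕ Fin 3)) ∧ v ∈ (f : Sym2 (Fin 3 ⊕ Fin 3)))

/-- The vertex of `L(K_{3,3})` corresponding to the edge `{inl i, inr j}`. -/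
def ev (i j : Fin 3) : (completeBipartiteGraph (Fin 3) (Fin 3)).edgeSet :=
  ⟨s(Sum.inl i, Sum.inr j), by simp⟩

lemma adj_ev {i j i' j' : Fin 3} (h : i = i' ∨ j = j') (hne : ev i j ≠ ev i' j') :
    lineGraphK33.Adj (ev i j) (ev i' j') := by
  refine ⟨hne, Or.inl ?_⟩
  rcases h with h | h
  · exact ⟨Sum.inl i, by simp [ev], by simp [ev, h]⟩
  · exact ⟨Sum.inr j, by simp [ev], by simp [ev, h]⟩

lemma induce_connected_of_adj {V : Type*} {G : SimpleGraph V} {s : Set V}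
    (hne : s.Nonempty) (h : ∀ x ∈ s, ∀ y ∈ s, x ≠ y → G.Adj x y) :
    (G.induce s).Connected := by
  rw [SimpleGraph.connected_iff]
  refine ⟨fun x y => ?_, ⟨⟨hne.choose, hne.choose_spec⟩⟩⟩
  rcases eq_or_ne x y with rfl | hxy
  · exact Reachable.refl _
  · exact SimpleGraph.Adj.reachable (h x.1 x.2 y.1 y.2 (fun he => hxy (Subtype.ext he)))

/-- The branch sets: hub = all edges at `inl 0`; rim = the six remaining edges. -/
def Bset : Fin 7 → Set (completeBipartiteGraph (Fin 3) (Fin 3)).edgeSet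
  | 0 => {ev 0 0, ev 0 1, ev 0 2}
  | 1 => {ev 1 0}
  | 2 => {ev 1 1}
  | 3 => {ev 2 1}
  | 4 => {ev 2 0}
  | 5 => {ev 2 2}
  | 6 => {ev 1 2}

/-- `W₆` is a minor of the line graph of `K_{3,3}`. -/
theorem stmt1 : W6.IsMinorOf lineGraphK33 := by
  refine ⟨Bset, ?_, ?_, ?_⟩
  · intro w
    fin_cases w
    · refine induce_connected_of_adj ⟨ev 0 0, by simp [Bset]⟩ ?_
      intro x hx y hy hxy
      simp only [Bset, Set.mem_insert_iff, Set.mem_singleton_iff] at hx hy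
      rcases hx with rfl | rfl | rfl <;> rcases hy with rfl | rfl | rfl <;>
        first
          | exact absurd rfl hxy
          | exact adj_ev (Or.inl rfl) hxy
    all_goals
      refine induce_connected_of_adj ⟨_, Set.mem_singleton _⟩ ?_
      intro x hx y hy hxy
      simp only [Bset, Set.mem_singleton_iff] at hx hy
      exact absurd (hx.trans hy.symm) hxy
  · intro i j hij
    fin_cases i <;> fin_cases j <;>
      first
        | exact absurd rfl hij
        | (simp only [Bset, Set.disjoint_left, Set.mem_insert_iff, Set.mem_singleton_iff]
           intro a ha hb
           revert ha hb
           rintro (rfl | rfl | rfl) h <;> revert h <;> decide)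
  · intro w₁ w₂ h
    have hmem : s(w₁, w₂) ∈ ({s(0,1), s(0,2), s(0,3), s(0,4), s(0,5), s(0,6),
        s(1,2), s(2,3), s(3,4), s(4,5), s(5,6), s(6,1)} : Set (Sym2 (Fin 7))) := h.1
    simp only [Set.mem_insert_iff, Set.mem_singleton_iff, Sym2.eq_iff] at hmem
    rcases hmem with (⟨rfl,rfl⟩|⟨rfl,rfl⟩) | (⟨rfl,rfl⟩|⟨rfl,rfl⟩) | (⟨rfl,rfl⟩|⟨rfl,rfl⟩) |
      (⟨rfl,rfl⟩|⟨rfl,rfl⟩) | (⟨rfl,rfl⟩|⟨rfl,rfl⟩) | (⟨rfl,rfl⟩|⟨rfl,rfl⟩) |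
      (⟨rfl,rfl⟩|⟨rfl,rfl⟩) | (⟨rfl,rfl⟩|⟨rfl,rfl⟩) | (⟨rfl,rfl⟩|⟨rfl,rfl⟩) |
      (⟨rfl,rfl⟩|⟨rfl,rfl⟩) | (⟨rfl,rfl⟩|⟨rfl,rfl⟩) | (⟨rfl,rfl⟩|⟨rfl,rfl⟩)
    -- 0-1 and 1-0
    · exact ⟨ev 0 0, by simp [Bset], ev 1 0, by simp [Bset], adj_ev (Or.inr rfl) (by decide)⟩
    · exact ⟨ev 1 0, by simp [Bset], ev 0 0, by simp [Bset], adj_ev (Or.inr rfl) (by decide)⟩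
    -- 0-2
    · exact ⟨ev 0 1, by simp [Bset], ev 1 1, by simp [Bset], adj_ev (Or.inr rfl) (by decide)⟩
    · exact ⟨ev 1 1, by simp [Bset], ev 0 1, by simp [Bset], adj_ev (Or.inr rfl) (by decide)⟩
    -- 0-3
    · exact ⟨ev 0 1, by simp [Bset], ev 2 1, by simp [Bset], adj_ev (Or.inr rfl) (by decide)⟩
    · exact ⟨ev 2 1, by simp [Bset], ev 0 1, by simp [Bset], adj_ev (Or.inr rfl) (by decide)⟩
    -- 0-4
    · exact ⟨ev 0 0, by simp [Bset], ev 2 0, by simp [Bset], adj_ev (Or.inr rfl) (by decide)⟩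
    · exact ⟨ev 2 0, by simp [Bset], ev 0 0, by simp [Bset], adj_ev (Or.inr rfl) (by decide)⟩
    -- 0-5
    · exact ⟨ev 0 2, by simp [Bset], ev 2 2, by simp [Bset], adj_ev (Or.inr rfl) (by decide)⟩
    · exact ⟨ev 2 2, by simp [Bset], ev 0 2, by simp [Bset], adj_ev (Or.inr rfl) (by decide)⟩
    -- 0-6
    · exact ⟨ev 0 2, by simp [Bset], ev 1 2, by simp [Bset], adj_ev (Or.inr rfl) (by decide)⟩
    · exact ⟨ev 1 2, by simp [Bset], ev 0 2, by simp [Bset], adj_ev (Or.inr rfl) (by decide)⟩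
    -- 1-2 : (1,0)-(1,1)
    · exact ⟨ev 1 0, by simp [Bset], ev 1 1, by simp [Bset], adj_ev (Or.inl rfl) (by decide)⟩
    · exact ⟨ev 1 1, by simp [Bset], ev 1 0, by simp [Bset], adj_ev (Or.inl rfl) (by decide)⟩
    -- 2-3 : (1,1)-(2,1)
    · exact ⟨ev 1 1, by simp [Bset], ev 2 1, by simp [Bset], adj_ev (Or.inr rfl) (by decide)⟩
    · exact ⟨ev 2 1, by simp [Bset], ev 1 1, by simp [Bset], adj_ev (Or.inr rfl) (by decide)⟩
    -- 3-4 : (2,1)-(2,0)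
    · exact ⟨ev 2 1, by simp [Bset], ev 2 0, by simp [Bset], adj_ev (Or.inl rfl) (by decide)⟩
    · exact ⟨ev 2 0, by simp [Bset], ev 2 1, by simp [Bset], adj_ev (Or.inl rfl) (by decide)⟩
    -- 4-5 : (2,0)-(2,2)
    · exact ⟨ev 2 0, by simp [Bset], ev 2 2, by simp [Bset], adj_ev (Or.inl rfl) (by decide)⟩
    · exact ⟨ev 2 2, by simp [Bset], ev 2 0, by simp [Bset], adj_ev (Or.inl rfl) (by decide)⟩
    -- 5-6 : (2,2)-(1,2)
    · exact ⟨ev 2 2, by simp [Bset], ev 1 2, by simp [Bset], adj_ev (Or.inr rfl) (by decide)⟩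
    · exact ⟨ev 1 2, by simp [Bset], ev 2 2, by simp [Bset], adj_ev (Or.inr rfl) (by decide)⟩
    -- 6-1 : (1,2)-(1,0)
    · exact ⟨ev 1 2, by simp [Bset], ev 1 0, by simp [Bset], adj_ev (Or.inl rfl) (by decide)⟩
    · exact ⟨ev 1 0, by simp [Bset], ev 1 2, by simp [Bset], adj_ev (Or.inl rfl) (by decide)⟩
end

section
/- The wheel graph W_6 is a minor of the graph K_{4,4} − 3K_2 obtained from the complete bipartite graph K_{4,4} by deleting a matching of three pairwise nonincident edges. -/
open SimpleGraph

/-- `K_{4,4}` minus a perfect matching of three pairwise nonincident edges. -/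
def K44m : SimpleGraph (Fin 4 ⊕ Fin 4) :=
  (completeBipartiteGraph (Fin 4) (Fin 4)).deleteEdges
    {s(Sum.inl 0, Sum.inr 0), s(Sum.inl 1, Sum.inr 1), s(Sum.inl 2, Sum.inr 2)}

lemma conn_singleton {V : Type*} (G : SimpleGraph V) (x : V) :
    (G.induce {x}).Connected := by
  have : Nonempty ({x} : Set V) := ⟨⟨x, rfl⟩⟩
  refine ⟨fun a b => ?_⟩
  have : a = b := Subtype.ext (by rw [a.2, b.2])
  exact this ▸ Reachable.refl a

lemma conn_pair {V : Type*} (G : SimpleGraph V) {x y : V} (h : G.Adj x y) :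
    (G.induce {x, y}).Connected := by
  have hx : x ∈ ({x, y} : Set V) := by simp
  have hy : y ∈ ({x, y} : Set V) := by simp
  have hadj : (G.induce {x, y}).Adj ⟨x, hx⟩ ⟨y, hy⟩ := h
  have : Nonempty ({x, y} : Set V) := ⟨⟨x, hx⟩⟩
  refine ⟨fun a b => ?_⟩
  have key : ∀ c : {v // v ∈ ({x,y} : Set V)}, (G.induce {x,y}).Reachable ⟨x, hx⟩ c := by
    intro c
    have : c = ⟨x, hx⟩ ∨ c = ⟨y, hy⟩ := by
      rcases c.2 with h1 | h1 <;> [left; right] <;> exact Subtype.ext h1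
    rcases this with rfl | rfl
    · exact Reachable.refl _
    · exact hadj.reachable
  exact (key a).symm.trans (key b)

def Bsets : Fin 7 → Set (Fin 4 ⊕ Fin 4)
  | 0 => {Sum.inl 3, Sum.inr 3}
  | 1 => {Sum.inl 0}
  | 2 => {Sum.inr 1}
  | 3 => {Sum.inl 2}
  | 4 => {Sum.inr 0}
  | 5 => {Sum.inl 1}
  | 6 => {Sum.inr 2}

/-- `W₆` is a minor of `K_{4,4} - 3K₂`. -/
theorem stmt3 : W6.IsMinorOf K44m := by
  refine ⟨Bsets, ?_, ?_, ?_⟩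
  · intro w
    fin_cases w <;> simp only [Bsets] <;>
      first
        | exact conn_pair _ (by simp [K44m, completeBipartiteGraph, Sym2.eq, Sym2.rel_iff'])
        | exact conn_singleton _ _
  · intro i j hij
    fin_cases i <;> fin_cases j <;>
      simp_all [Bsets, Set.disjoint_left]
  · intro w₁ w₂ h
    simp only [W6, fromEdgeSet_adj, Set.mem_insert_iff, Set.mem_singleton_iff,
      Sym2.eq, Sym2.rel_iff', Prod.mk.injEq, Prod.swap_prod_mk, ne_eq] at h
    obtain ⟨h, -⟩ := h
    rcases h with (h|h)|(h|h)|(h|h)|(h|h)|(h|h)|(h|h)|(h|h)|(h|h)|(h|h)|(h|h)|(h|h)|(h|h) <;>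
      obtain ⟨rfl, rfl⟩ := h <;>
      simp only [Bsets] <;>
      simp [Set.mem_insert_iff, Set.mem_singleton_iff, K44m, completeBipartiteGraph,
        Sym2.eq, Sym2.rel_iff']
end

section
/- The Möbius–Kantor graph V_8 (the 8-cycle 1-2-3-4-5-6-7-8-1 together with the four diagonals 15, 26, 37, 48) is W_6-minor-free: it has no minor isomorphic to the wheel W_6. -/
open SimpleGraph

/-! The branch set of the hub of `W₆` meets six pairwise disjoint branch sets, so it has at least
six neighbours outside itself. As the seven branch sets are disjoint and nonempty in the eight
vertices of `V₈`, the hub's branch set has at most two vertices. But `V₈` is cubic of diameter 2,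
so two vertices have at most five neighbours outside themselves: at most four if they are
adjacent, and a common neighbour otherwise. -/

open Finset Function

theorem Finset.card_add_card_le_of_pairwise_disjoint {V W : Type*} [Fintype V] [Fintype W]
    [DecidableEq V] {B : W → Finset V} (hne : ∀ w, (B w).Nonempty)
    (hdisj : Pairwise (Disjoint on B)) (w : W) : #(B w) + Fintype.card W ≤ Fintype.card V + 1 := by
  classical
  have hsum : ∑ u, #(B u) ≤ Fintype.card V := by
    rw [← card_biUnion (hdisj.set_pairwise _)]
    exact card_le_univ _
  have hrest : #(univ.erase w) ≤ ∑ u ∈ univ.erase w, #(B u) :=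
    card_eq_sum_ones (univ.erase w) ▸ sum_le_sum fun u _ => (hne u).card_pos
  rw [← add_sum_erase _ _ (mem_univ w)] at hsum
  rw [card_erase_of_mem (mem_univ w), card_univ] at hrest
  have := Fintype.card_pos_iff.mpr ⟨w⟩
  omega

namespace SimpleGraph

variable {V W : Type*} {G : SimpleGraph V} {H : SimpleGraph W}

def openNeighborFinset (G : SimpleGraph V) [Fintype V] [DecidableEq V] [DecidableRel G.Adj]
    (S : Finset V) : Finset V :=
  {v | v ∉ S ∧ ∃ u ∈ S, G.Adj u v}

theorem IsMinorOf.exists_finset_branchSets [Fintype V] (h : H.IsMinorOf G) :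
    ∃ B : W → Finset V, (∀ w, (B w).Nonempty) ∧ Pairwise (Disjoint on B) ∧
      ∀ w₁ w₂, H.Adj w₁ w₂ → ∃ x ∈ B w₁, ∃ y ∈ B w₂, G.Adj x y := by
  classical
  obtain ⟨B, hconn, hdisj, hadj⟩ := h
  refine ⟨fun w => (B w).toFinset, fun w => ?_, fun w₁ w₂ hne => ?_, fun w₁ w₂ h => ?_⟩
  · obtain ⟨⟨v, hv⟩⟩ := (hconn w).nonempty
    exact ⟨v, Set.mem_toFinset.mpr hv⟩
  · exact Set.disjoint_toFinset.mpr (hdisj hne)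
  · simpa using hadj w₁ w₂ h

theorem degree_le_card_openNeighborFinset [Fintype V] [DecidableEq V] [DecidableRel G.Adj]
    [Fintype W] [DecidableRel H.Adj] {B : W → Finset V} (hdisj : Pairwise (Disjoint on B))
    (hadj : ∀ w₁ w₂, H.Adj w₁ w₂ → ∃ x ∈ B w₁, ∃ y ∈ B w₂, G.Adj x y) (w : W) :
    H.degree w ≤ #(G.openNeighborFinset (B w)) := by
  have hhit : ∀ u : H.neighborSet w, ∃ y : G.openNeighborFinset (B w), (y : V) ∈ B u := by
    rintro ⟨u, hu⟩
    obtain ⟨x, hx, y, hy, hxy⟩ := hadj w u hu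
    refine ⟨⟨y, ?_⟩, hy⟩
    simp only [openNeighborFinset, mem_filter, mem_univ, true_and]
    exact ⟨Finset.disjoint_left.mp (hdisj (H.ne_of_adj hu).symm) hy, x, hx, hxy⟩
  choose f hf using hhit
  have hinj : Function.Injective f := by
    intro u₁ u₂ h
    by_contra hne
    exact Finset.disjoint_left.mp (hdisj (Subtype.coe_injective.ne hne)) (hf u₁) (h ▸ hf u₂)
  calc H.degree w = Fintype.card (H.neighborSet w) := (card_neighborSet_eq_degree H w).symm
    _ ≤ Fintype.card (G.openNeighborFinset (B w)) := Fintype.card_le_of_injective f hinj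
    _ = #(G.openNeighborFinset (B w)) := Fintype.card_coe _

end SimpleGraph

instance : DecidableRel V8.Adj := fun _ _ => by unfold V8; infer_instance

instance : DecidableRel W6.Adj := fun _ _ => by unfold W6; infer_instance

theorem W6_degree_hub : W6.degree 0 = 6 := by decide

set_option maxRecDepth 100000 in
theorem V8_card_openNeighborFinset_le_five :
    ∀ S : Finset (Fin 8), #S ≤ 2 → #(V8.openNeighborFinset S) ≤ 5 := by
  decide

/-- `V₈` is `W₆`-minor-free. -/
theorem stmt4 : ¬ W6.IsMinorOf V8 := by
  intro h
  obtain ⟨B, hne, hdisj, hadj⟩ := IsMinorOf.exists_finset_branchSets h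
  have hhub_small : #(B 0) ≤ 2 := by
    have := card_add_card_le_of_pairwise_disjoint hne hdisj 0
    simp only [Fintype.card_fin] at this
    omega
  have hhub_nbrs := degree_le_card_openNeighborFinset hdisj hadj 0
  rw [W6_degree_hub] at hhub_nbrs
  have := V8_card_openNeighborFinset_le_five (B 0) hhub_small
  omega
end

section
/- The graph C_8^2, obtained from a cycle on 8 vertices by adding edges between all pairs of vertices at distance two on the cycle, contains no W_6 minor. -/
open SimpleGraph

/-- `C₈²`: the 8-cycle plus all chords between vertices at cycle-distance two. -/
def C8sq : SimpleGraph (Fin 8) := SimpleGraph.fromEdgeSet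
  {s(0,1), s(1,2), s(2,3), s(3,4), s(4,5), s(5,6), s(6,7), s(7,0),
   s(0,2), s(1,3), s(2,4), s(3,5), s(4,6), s(5,7), s(6,0), s(7,1)}

lemma C8sq_adj (a b : Fin 8) : C8sq.Adj a b ↔
    ((a.val + 1) % 8 = b.val ∨ (b.val + 1) % 8 = a.val ∨
     (a.val + 2) % 8 = b.val ∨ (b.val + 2) % 8 = a.val) := by
  simp only [C8sq, fromEdgeSet_adj, Set.mem_insert_iff, Set.mem_singleton_iff, Sym2.eq,
    Sym2.rel_iff']
  fin_cases a <;> fin_cases b <;> simp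

instance C8sq.adjDec : DecidableRel C8sq.Adj := fun a b =>
  decidable_of_iff _ (C8sq_adj a b).symm

lemma key (a b : Fin 8) (h : a = b ∨ C8sq.Adj a b) :
    ((C8sq.neighborFinset a ∪ C8sq.neighborFinset b) \ {a, b}).card ≤ 5 := by
  rw [C8sq_adj] at h
  revert h; revert b; revert a; decide

lemma W6_adj0 (k : Fin 7) (hk : k ≠ 0) : W6.Adj 0 k := by
  fin_cases k
  · exact absurd rfl hk
  all_goals simp [W6, fromEdgeSet_adj]

/-- `C₈²` contains no `W₆` minor. -/
theorem stmt6 : ¬ W6.IsMinorOf C8sq := by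
  rintro ⟨B, hconn, hdisj, hadj⟩
  classical
  -- For each rim vertex `k ≠ 0`, there is an edge from `B 0` to `B k`.
  have hex : ∀ k : Fin 7, k ≠ 0 →
      ∃ p : Fin 8 × Fin 8, p.1 ∈ B 0 ∧ p.2 ∈ B k ∧ C8sq.Adj p.1 p.2 := by
    intro k hk
    obtain ⟨x, hx, y, hy, hxy⟩ := hadj 0 k (W6_adj0 k hk)
    exact ⟨(x, y), hx, hy, hxy⟩
  set f : Fin 7 → Fin 8 := fun k =>
    if h : ∃ p : Fin 8 × Fin 8, p.1 ∈ B 0 ∧ p.2 ∈ B k ∧ C8sq.Adj p.1 p.2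
    then h.choose.2 else 0 with hf
  have hfB : ∀ k : Fin 7, k ≠ 0 → f k ∈ B k ∧ ∃ x ∈ B 0, C8sq.Adj x (f k) := by
    intro k hk
    have h := hex k hk
    simp only [hf, dif_pos h]
    exact ⟨h.choose_spec.2.1, h.choose.1, h.choose_spec.1, h.choose_spec.2.2⟩
  set S6 : Finset (Fin 7) := {1, 2, 3, 4, 5, 6} with hS6
  have hS6card : S6.card = 6 := by decide
  have hS6ne : ∀ k ∈ S6, k ≠ 0 := by decide
  have hinj : Set.InjOn f S6 := by
    intro i hi j hj hij
    by_contra hne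
    have d := hdisj hne
    have h1 := (hfB i (hS6ne i hi)).1
    have h2 := (hfB j (hS6ne j hj)).1
    rw [hij] at h1
    exact Set.disjoint_left.mp d h1 h2
  have hB0fin : (B 0).Finite := Set.toFinite _
  set B0 : Finset (Fin 8) := hB0fin.toFinset with hB0
  have hB0ne : B0.Nonempty := by
    obtain ⟨⟨a, ha⟩⟩ := (hconn 0).nonempty
    exact ⟨a, hB0fin.mem_toFinset.mpr ha⟩
  have hdisjF : Disjoint B0 (S6.image f) := by
    rw [Finset.disjoint_left]
    intro x hx hximg
    obtain ⟨k, hk, rfl⟩ := Finset.mem_image.mp hximg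
    exact Set.disjoint_left.mp (hdisj (Ne.symm (hS6ne k hk)))
      (hB0fin.mem_toFinset.mp hx) (hfB k (hS6ne k hk)).1
  have hcard : B0.card + 6 ≤ 8 := by
    have h1 : (B0 ∪ S6.image f).card ≤ 8 := by
      have := Finset.card_le_univ (B0 ∪ S6.image f)
      simpa using this
    rwa [Finset.card_union_of_disjoint hdisjF,
      Finset.card_image_of_injOn hinj, hS6card] at h1
  have hcases : B0.card = 1 ∨ B0.card = 2 := by
    have := Finset.card_pos.mpr hB0ne
    omega
  -- Extract `a, b` spanning `B 0`, with `a = b` or `a ~ b`.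
  obtain ⟨a, b, hab, hsub, haB, hbB⟩ :
      ∃ a b : Fin 8, (a = b ∨ C8sq.Adj a b) ∧ B 0 ⊆ {a, b} ∧ a ∈ B 0 ∧ b ∈ B 0 := by
    rcases hcases with h1 | h2
    · obtain ⟨a, ha⟩ := Finset.card_eq_one.mp h1
      have haB : a ∈ B 0 := hB0fin.mem_toFinset.mp
        (by show a ∈ B0; rw [ha]; exact Finset.mem_singleton_self a)
      refine ⟨a, a, Or.inl rfl, ?_, haB, haB⟩
      intro x hx
      have : x ∈ B0 := hB0fin.mem_toFinset.mpr hx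
      rw [ha, Finset.mem_singleton] at this
      simp [this]
    · obtain ⟨a, b, hne, hab2⟩ := Finset.card_eq_two.mp h2
      have haB : a ∈ B 0 := hB0fin.mem_toFinset.mp (by show a ∈ B0; rw [hab2]; simp)
      have hbB : b ∈ B 0 := hB0fin.mem_toFinset.mp (by show b ∈ B0; rw [hab2]; simp)
      have hsub : B 0 ⊆ {a, b} := by
        intro x hx
        have : x ∈ B0 := hB0fin.mem_toFinset.mpr hx
        rw [hab2, Finset.mem_insert, Finset.mem_singleton] at this
        rcases this with h | h <;> simp [h]
      refine ⟨a, b, Or.inr ?_, hsub, haB, hbB⟩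
      -- adjacency from connectivity of the induced graph on `B 0 = {a, b}`
      obtain ⟨w⟩ := (hconn 0).preconnected ⟨a, haB⟩ ⟨b, hbB⟩
      have hwnil : ¬ w.Nil := by
        intro hnil
        have := SimpleGraph.Walk.Nil.eq hnil
        exact hne (congrArg Subtype.val this)
      have hadj2 := w.adj_snd hwnil
      have hsnd : ((w.getVert 1 : ↥(B 0)) : Fin 8) ∈ B 0 := (w.getVert 1).2
      have hadj3 : C8sq.Adj a ((w.getVert 1 : ↥(B 0)) : Fin 8) := hadj2
      rcases hsub hsnd with h | h
      · rw [h] at hadj3; exact absurd hadj3 (C8sq.irrefl)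
      · simp only [Set.mem_singleton_iff] at h; rwa [h] at hadj3
  -- Final contradiction: 6 distinct vertices in a neighborhood of size ≤ 5.
  set N : Finset (Fin 8) := (C8sq.neighborFinset a ∪ C8sq.neighborFinset b) \ {a, b} with hN
  have hmaps : ∀ k ∈ S6, f k ∈ N := by
    intro k hk
    obtain ⟨hfk, x, hx, hadjx⟩ := hfB k (hS6ne k hk)
    have hnotB0 : f k ∉ B 0 := fun h =>
      Set.disjoint_left.mp (hdisj (Ne.symm (hS6ne k hk))) h hfk
    have hna : f k ≠ a := fun h => hnotB0 (h ▸ haB)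
    have hnb : f k ≠ b := fun h => hnotB0 (h ▸ hbB)
    have hor : C8sq.Adj a (f k) ∨ C8sq.Adj b (f k) := by
      rcases hsub hx with rfl | h
      · exact Or.inl hadjx
      · rw [Set.mem_singleton_iff] at h; subst h; exact Or.inr hadjx
    rw [hN, Finset.mem_sdiff, Finset.mem_union, mem_neighborFinset, mem_neighborFinset]
    refine ⟨hor, ?_⟩
    simp [hna, hnb]
  have h6 : S6.card ≤ N.card := Finset.card_le_card_of_injOn f hmaps hinj
  have h5 := key a b hab
  rw [hS6card] at h6
  rw [← hN] at h5
  omega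
end

section
/- The only 3-connected simple graphs on 6 vertices that are nonplanar are exactly the graphs obtained from K_{3,3} by adding a (possibly empty) set of extra edges; equivalently, every 3-connected nonplanar simple graph on 6 vertices contains K_{3,3} as a spanning subgraph. -/
open SimpleGraph

/-- `G` is 3-connected: at least 4 vertices and deleting any 2 vertices leaves it connected. -/
def ThreeConnected {V : Type*} (G : SimpleGraph V) : Prop :=
  4 ≤ Nat.card V ∧ ∀ s : Set V, s.ncard ≤ 2 → (G.induce sᶜ).Connected

/-- Nonplanarity, via Wagner's theorem: a `K₅` or `K_{3,3}` minor. -/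
def Nonplanar {V : Type*} (G : SimpleGraph V) : Prop :=
  (⊤ : SimpleGraph (Fin 5)).IsMinorOf G ∨
  (completeBipartiteGraph (Fin 3) (Fin 3)).IsMinorOf G

/-!
On six vertices a `K_{3,3}` minor has singleton branch sets, so it is already a spanning
`K_{3,3}`. A `K₅` minor has at most one branch set of size two; since a 3-connected graph has
minimum degree 3, the leftover vertex can always be absorbed, so in either case there is an
edge `xy` whose complement `S` is a 4-clique with every vertex of `S` adjacent to `x` or `y`.
As `x` and `y` each have at least two neighbours in `S`, one can split `S = P ∪ Q` into pairs
with `P` joined to `y` and `Q` joined to `x`; then `{x} ∪ P` and `{y} ∪ Q` are the two sides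
of a `K_{3,3}`.
-/

open Finset

lemma Function.Injective.exists_range_eq_compl_singleton {α β : Type*} [Finite β] {f : α → β}
    (hf : Function.Injective f) (hcard : Nat.card β = Nat.card α + 1) :
    ∃ u, Set.range f = {u}ᶜ := by
  obtain ⟨u, hu⟩ := Set.ncard_eq_one.1 <| show (Set.range f)ᶜ.ncard = 1 by
    rw [Set.ncard_compl, Set.ncard_range_of_injective hf, hcard]; omega
  exact ⟨u, (compl_eq_comm.1 hu).symm⟩

namespace SimpleGraph

variable {V W : Type*} {G : SimpleGraph V} {H : SimpleGraph W}

lemma exists_mem_adj_of_connected_induce {s : Set V} (hs : (G.induce s).Connected) {x y : V}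
    (hx : x ∈ s) (hy : y ∈ s) (hxy : x ≠ y) : ∃ z ∈ s, G.Adj x z := by
  have : Nontrivial s := Set.nontrivial_coe_sort.2 ⟨x, hx, y, hy, hxy⟩
  obtain ⟨z, hz⟩ := hs.preconnected.exists_adj_of_nontrivial ⟨x, hx⟩
  exact ⟨z, z.2, hz⟩

lemma degree_le_card_filter_adj_add_one [Fintype V] [DecidableRel G.Adj]
    {x y : V} {S : Finset V} (hS : ∀ v, G.Adj x v → v ≠ y → v ∈ S) :
    G.degree x ≤ #(S.filter (G.Adj x)) + 1 := by
  classical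
  calc G.degree x = #(G.neighborFinset x) := (card_neighborFinset_eq_degree G x).symm
    _ ≤ #(insert y (S.filter (G.Adj x))) := card_le_card fun v hv => by
      rw [mem_neighborFinset] at hv
      by_cases hvy : v = y
      · exact hvy ▸ mem_insert_self _ _
      · exact mem_insert_of_mem (mem_filter.2 ⟨hS v hv hvy, hv⟩)
    _ ≤ _ := card_insert_le _ _

lemma isMinorOf_of_injective (f : W → V) (hf : Function.Injective f)
    (hadj : ∀ a b, H.Adj a b → G.Adj (f a) (f b)) : H.IsMinorOf G :=
  ⟨fun w => {f w}, fun _ => (connected_iff _).2 ⟨.of_subsingleton, inferInstance⟩,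
    fun _ _ hab => Set.disjoint_singleton.2 (hf.ne hab),
    fun a b h => ⟨f a, rfl, f b, rfl, hadj a b h⟩⟩

lemma exists_injective_mem_branch {B : W → Set V} (hconn : ∀ w, (G.induce (B w)).Connected)
    (hdisj : Pairwise fun a b => Disjoint (B a) (B b)) :
    ∃ f : W → V, Function.Injective f ∧ ∀ w, f w ∈ B w := by
  have hne : ∀ w, ∃ x, x ∈ B w := fun w => (hconn w).nonempty.elim fun x => ⟨x.1, x.2⟩
  choose f hfB using hne
  exact ⟨f, fun a b hab => subsingleton_setOfPred_mem_iff_pairwise_disjoint.2 hdisj _ (hfB a)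
    (show f a ∈ B b from hab ▸ hfB b), hfB⟩

lemma IsMinorOf.exists_equiv_of_card_le [Finite V] (h : H.IsMinorOf G)
    (hcard : Nat.card V ≤ Nat.card W) :
    ∃ e : W ≃ V, ∀ a b, H.Adj a b → G.Adj (e a) (e b) := by
  obtain ⟨B, hconn, hdisj, hedge⟩ := h
  obtain ⟨f, hf, hfB⟩ := exists_injective_mem_branch hconn hdisj
  have hbij := hf.bijective_of_nat_card_le hcard
  have hB : ∀ w, ∀ x ∈ B w, x = f w := fun w x hx => by
    obtain ⟨w', rfl⟩ := hbij.2 x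
    rw [subsingleton_setOfPred_mem_iff_pairwise_disjoint.2 hdisj _ hx (hfB w')]
  refine ⟨Equiv.ofBijective f hbij, fun a b hab => ?_⟩
  obtain ⟨x, hx, y, hy, hxy⟩ := hedge a b hab
  rwa [hB a x hx, hB b y hy] at hxy

lemma exists_equiv_completeBipartiteGraph_of_forall_adj_compl [Fintype V] {m n : ℕ}
    (hV : Fintype.card V = m + n) (A : Finset V) (hA : #A = m)
    (hadj : ∀ a ∈ A, ∀ b ∉ A, G.Adj a b) :
    ∃ e : (Fin m ⊕ Fin n) ≃ V,
      ∀ a b, (completeBipartiteGraph (Fin m) (Fin n)).Adj a b → G.Adj (e a) (e b) := by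
  classical
  let eA : Fin m ≃ A := (Fintype.equivFinOfCardEq (by rw [Fintype.card_coe, hA])).symm
  let eB : Fin n ≃ {v // v ∉ A} := (Fintype.equivFinOfCardEq
    (by rw [Fintype.card_subtype_compl, Fintype.card_coe, hV, hA]; omega)).symm
  refine ⟨(Equiv.sumCongr eA eB).trans (Equiv.sumCompl (· ∈ A)), ?_⟩
  rintro (i | i) (j | j) h
  · simp at h
  · exact hadj _ (eA i).2 _ (eB j).2
  · exact (hadj _ (eA j).2 _ (eB i).2).symm
  · simp at h

lemma exists_forall_adj_compl_of_isClique [Fintype V] [DecidableRel G.Adj]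
    {x y : V} {S : Finset V} (hxy : G.Adj x y) (hxS : x ∉ S) (hS : #S ≤ 4)
    (hcov : ∀ v, v ≠ x → v ≠ y → v ∈ S) (hclique : G.IsClique (S : Set V))
    (hcover : ∀ s ∈ S, G.Adj x s ∨ G.Adj y s) (hx : 3 ≤ G.degree x) (hy : 3 ≤ G.degree y) :
    ∃ A : Finset V, #A = 3 ∧ ∀ a ∈ A, ∀ b ∉ A, G.Adj a b := by
  classical
  have hSx : 2 ≤ #(S.filter (G.Adj x)) := by
    have := degree_le_card_filter_adj_add_one (G := G) (y := y) (S := S)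
      fun v hv hvy => hcov v hv.ne' hvy
    omega
  have hSy : 2 ≤ #(S.filter (G.Adj y)) := by
    have := degree_le_card_filter_adj_add_one (G := G) (y := x) (S := S)
      fun v hv hvx => hcov v hvx hv.ne'
    omega
  have hmissing : S \ S.filter (G.Adj x) ⊆ S.filter (G.Adj y) := fun s hs => by
    simp only [mem_sdiff, mem_filter, not_and] at hs
    exact mem_filter.2 ⟨hs.1, (hcover s hs.1).resolve_left (hs.2 hs.1)⟩
  have hmissing_card : #(S \ S.filter (G.Adj x)) ≤ 2 := by
    rw [card_sdiff_of_subset (filter_subset _ _)]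
    omega
  obtain ⟨P, hmissingP, hPy, hP⟩ := exists_subsuperset_card_eq hmissing hmissing_card hSy
  refine ⟨insert x P, ?_, fun a ha b hb => ?_⟩
  · rw [card_insert_of_notMem fun h => hxS (filter_subset _ _ (hPy h)), hP]
  obtain ⟨hbx, hbP⟩ : b ≠ x ∧ b ∉ P := by simpa using hb
  have hbyS : b = y ∨ b ∈ S := (em (b = y)).imp_right (hcov b hbx)
  rcases mem_insert.1 ha with rfl | haP
  · rcases hbyS with rfl | hbS
    · exact hxy
    · by_contra hab
      exact hbP (hmissingP (by simp [hbS, hab]))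
  · obtain ⟨haS, hya⟩ := mem_filter.1 (hPy haP)
    rcases hbyS with rfl | hbS
    · exact hya.symm
    · exact hclique haS hbS fun h => hbP (h ▸ haP)

/-- When `u` is the only vertex that is not a representative, either `u` lies in some branch set,
which is then an edge, or `u` has a neighbour, and that is the representative of a singleton. -/
lemma exists_adj_of_range_eq_compl_singleton {B : W → Set V}
    (hconn : ∀ w, (G.induce (B w)).Connected) (hdisj : Pairwise fun a b => Disjoint (B a) (B b))
    {f : W → V} (hfB : ∀ w, f w ∈ B w) {u : V} (hu : Set.range f = {u}ᶜ)
    (hnbr : ∃ v, G.Adj u v) :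
    ∃ t, G.Adj (f t) u ∧ (∀ p ∈ B t, p = f t ∨ p = u) ∧ ∀ i ≠ t, ∀ p ∈ B i, p = f i := by
  have hunique : ∀ {x a b}, x ∈ B a → x ∈ B b → a = b := fun ha hb =>
    subsingleton_setOfPred_mem_iff_pairwise_disjoint.2 hdisj _ ha hb
  have hmem : ∀ i, ∀ p ∈ B i, p = f i ∨ p = u := fun i p hp =>
    or_iff_not_imp_right.2 fun hpu => by
      obtain ⟨j, rfl⟩ : p ∈ Set.range f := hu ▸ hpu
      rw [hunique hp (hfB j)]
  obtain ⟨t, hadj, hut⟩ : ∃ t, G.Adj (f t) u ∧ ∀ i ≠ t, u ∉ B i := by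
    by_cases hU : ∃ t, u ∈ B t
    · obtain ⟨t, ht⟩ := hU
      have hfu : f t ≠ u := (hu ▸ Set.mem_range_self t : f t ∈ ({u}ᶜ : Set V))
      refine ⟨t, ?_, fun i hi hui => hi (hunique hui ht)⟩
      obtain ⟨z, hz, hfz⟩ := exists_mem_adj_of_connected_induce (hconn t) (hfB t) ht hfu
      rcases hmem t z hz with rfl | rfl
      · exact absurd hfz G.irrefl
      · exact hfz
    · push Not at hU
      obtain ⟨v, huv⟩ := hnbr
      obtain ⟨t, rfl⟩ : v ∈ Set.range f := hu ▸ huv.ne'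
      exact ⟨t, huv.symm, fun i _ => hU i⟩
  exact ⟨t, hadj, hmem t, fun i hi p hp => (hmem i p hp).resolve_right fun h => hut i hi (h ▸ hp)⟩

lemma exists_adj_isClique_of_top_isMinorOf [Fintype V] [Fintype W]
    (hV : Fintype.card V = Fintype.card W + 1) (h : (⊤ : SimpleGraph W).IsMinorOf G)
    (hnbr : ∀ v, ∃ w, G.Adj v w) :
    ∃ x y : V, ∃ S : Finset V, G.Adj x y ∧ x ∉ S ∧ #S + 1 = Fintype.card W ∧
      (∀ v, v ≠ x → v ≠ y → v ∈ S) ∧ G.IsClique (S : Set V) ∧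
      ∀ s ∈ S, G.Adj x s ∨ G.Adj y s := by
  classical
  obtain ⟨B, hconn, hdisj, hedge⟩ := h
  obtain ⟨f, hf, hfB⟩ := exists_injective_mem_branch hconn hdisj
  obtain ⟨u, hu⟩ := hf.exists_range_eq_compl_singleton (by simp [Nat.card_eq_fintype_card, hV])
  obtain ⟨t, hadj, hBt, hsingle⟩ :=
    exists_adj_of_range_eq_compl_singleton hconn hdisj hfB hu (hnbr u)
  refine ⟨f t, u, (univ.erase t).image f, hadj, ?_, ?_, fun v hvx hvu => ?_, ?_, ?_⟩
  · simp [hf.eq_iff]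
  · rw [card_image_of_injective _ hf, card_erase_of_mem (mem_univ t), card_univ]
    have := Fintype.card_pos_iff.2 ⟨t⟩
    omega
  · obtain ⟨i, rfl⟩ : v ∈ Set.range f := hu ▸ hvu
    simpa [hf.eq_iff] using hvx
  · intro a ha b hb hab
    obtain ⟨i, hi, rfl⟩ : ∃ i, i ≠ t ∧ f i = a := by simpa using ha
    obtain ⟨j, hj, rfl⟩ : ∃ j, j ≠ t ∧ f j = b := by simpa using hb
    obtain ⟨p, hp, q, hq, hpq⟩ := hedge i j ((top_adj _ _).2 (hf.ne_iff.1 hab))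
    rwa [hsingle i hi p hp, hsingle j hj q hq] at hpq
  · simp only [mem_image, mem_erase, mem_univ, and_true]
    rintro _ ⟨j, hj, rfl⟩
    obtain ⟨p, hp, q, hq, hpq⟩ := hedge t j ((top_adj _ _).2 (Ne.symm hj))
    rw [hsingle j hj q hq] at hpq
    rcases hBt p hp with rfl | rfl
    · exact .inl hpq
    · exact .inr hpq

end SimpleGraph

lemma ThreeConnected.three_le_degree {V : Type*} [Fintype V] {G : SimpleGraph V}
    [DecidableRel G.Adj] (h : ThreeConnected G) (v : V) : 3 ≤ G.degree v := by
  classical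
  by_contra! hlt
  set N := G.neighborFinset v
  have hN : #N ≤ 2 := by rw [card_neighborFinset_eq_degree]; omega
  obtain ⟨w, hw⟩ : ∃ w, w ∉ insert v N := by
    by_contra! hall
    have h4 := h.1
    have := card_le_card fun x (_ : x ∈ univ) => hall x
    rw [card_univ, ← Nat.card_eq_fintype_card] at this
    have := card_insert_le v N
    omega
  obtain ⟨hwv, hwN⟩ : w ≠ v ∧ w ∉ N := by simpa using hw
  obtain ⟨z, hzN, hvz⟩ := exists_mem_adj_of_connected_induce
    (h.2 N (by rw [Set.ncard_coe_finset]; exact hN))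
    (show v ∈ (N : Set V)ᶜ by simp [N]) (show w ∈ (N : Set V)ᶜ from hwN) hwv.symm
  exact hzN (by simpa [N] using hvz)

/-- A 3-connected graph on 6 vertices is nonplanar iff it contains `K_{3,3}` as a spanning
subgraph, i.e. iff it is obtained from `K_{3,3}` by adding edges. -/
theorem stmt11 {V : Type*} [Fintype V] (hV : Fintype.card V = 6) (G : SimpleGraph V)
    (h3 : ThreeConnected G) :
    Nonplanar G ↔ ∃ e : (Fin 3 ⊕ Fin 3) ≃ V,
      ∀ a b, (completeBipartiteGraph (Fin 3) (Fin 3)).Adj a b → G.Adj (e a) (e b) := by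
  classical
  refine ⟨?_, fun ⟨e, he⟩ => .inr (isMinorOf_of_injective e e.injective he)⟩
  rintro (hK5 | hK33)
  · have hdeg := h3.three_le_degree
    obtain ⟨x, y, S, hxy, hxS, hS, hcov, hclique, hcover⟩ :=
      exists_adj_isClique_of_top_isMinorOf (by simp [hV]) hK5
        fun v => G.degree_pos_iff_exists_adj v |>.1 (by linarith [hdeg v])
    obtain ⟨A, hA, hAadj⟩ := exists_forall_adj_compl_of_isClique hxy hxS (by simp at hS; omega)
      hcov hclique hcover (hdeg x) (hdeg y)
    exact exists_equiv_completeBipartiteGraph_of_forall_adj_compl hV A hA hAadj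
  · exact hK33.exists_equiv_of_card_le (by simp [Nat.card_eq_fintype_card, hV])
end

section
/- The graph V_8 + 13 + 24 (V_8 together with additional edges 13 and 24) is internally 4-connected and contains no W_6 minor. -/
open SimpleGraph

/-- A 3-separation of `G`. -/
def IsSep3 {V : Type*} (G : SimpleGraph V) (G1 G2 : G.Subgraph) : Prop :=
  G1.edgeSet ∪ G2.edgeSet = G.edgeSet ∧
  G1.verts ∪ G2.verts = Set.univ ∧
  (G1.verts \ G2.verts).Nonempty ∧ (G2.verts \ G1.verts).Nonempty ∧
  (G1.verts ∩ G2.verts).ncard = 3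

/-- Internally 4-connected: 3-connected, at least 5 vertices, and every 3-separation has a
side isomorphic to `K_{1,3}`. -/
def Internally4Connected {V : Type*} (G : SimpleGraph V) : Prop :=
  ThreeConnected G ∧ 5 ≤ Nat.card V ∧
  ∀ G1 G2 : G.Subgraph, IsSep3 G G1 G2 →
    Nonempty (G1.coe ≃g completeBipartiteGraph (Fin 1) (Fin 3)) ∨
    Nonempty (G2.coe ≃g completeBipartiteGraph (Fin 1) (Fin 3))

/-- `V₈ + 13 + 24` (labels `1,…,8` as `0,…,7`). -/
def V8_13_24 : SimpleGraph (Fin 8) := V8 ⊔ SimpleGraph.fromEdgeSet {s(0,2), s(1,3)}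

/-!
Connectivity of the relevant induced subgraphs is checked by a flood-fill computation. Deleting
at most two vertices leaves the graph connected. Given a 3-separation with separator `X`, no edge
joins the private parts of the two sides, so `G - X` is disconnected; the only such `X` are the
neighbourhoods of the degree-3 vertices `v`, which are independent and leave `G - X - v`
connected. Hence `v` is the only private vertex of its side, and that side is the star `K_{1,3}`.

In a `W₆` minor the branch set of the hub is connected and is adjacent to six disjoint branch
sets, so it has at least six outside neighbours and hence at most two vertices: it is a vertex or
an edge. But every vertex and every edge of `V₈ + 13 + 24` has at most five outside neighbours.
-/

namespace SimpleGraph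

variable {V : Type*} (G : SimpleGraph V)

section FloodFill

variable [DecidableEq V] [DecidableRel G.Adj]

def floodStep (t S : Finset V) : Finset V := {y ∈ t | y ∈ S ∨ ∃ x ∈ S, G.Adj x y}

def FloodFills [Fintype V] (t : Finset V) : Prop :=
  ∃ r ∈ t, t ⊆ (G.floodStep t)^[Fintype.card V] {r}

instance [Fintype V] : DecidablePred G.FloodFills := fun t =>
  inferInstanceAs (Decidable (∃ r ∈ t, t ⊆ (G.floodStep t)^[Fintype.card V] {r}))

theorem exists_reachable_of_mem_iterate_floodStep {t : Finset V} {r : V} (hr : r ∈ t) :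
    ∀ {n : ℕ} {y : V}, y ∈ (G.floodStep t)^[n] {r} →
      ∃ hy : y ∈ t, (G.induce (t : Set V)).Reachable ⟨r, hr⟩ ⟨y, hy⟩
  | 0, y, hy => by
    obtain rfl := Finset.mem_singleton.1 hy
    exact ⟨hr, .rfl⟩
  | n + 1, y, hy => by
    rw [Function.iterate_succ_apply', floodStep, Finset.mem_filter] at hy
    obtain ⟨hyt, hy | ⟨x, hx, hxy⟩⟩ := hy
    · exact exists_reachable_of_mem_iterate_floodStep hr hy
    · obtain ⟨hxt, hrx⟩ := exists_reachable_of_mem_iterate_floodStep hr hx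
      exact ⟨hyt, hrx.trans (Adj.reachable (G := G.induce (t : Set V)) hxy)⟩

theorem FloodFills.connected_induce [Fintype V] {t : Finset V} (h : G.FloodFills t) :
    (G.induce (t : Set V)).Connected := by
  obtain ⟨r, hr, hcov⟩ := h
  exact (connected_iff_exists_forall_reachable _).2
    ⟨⟨r, hr⟩, fun y => (G.exists_reachable_of_mem_iterate_floodStep hr (hcov y.2)).2⟩

end FloodFill

theorem subset_of_preconnected_induce {s A : Set V} (hs : (G.induce s).Preconnected)
    (hA : ∀ x ∈ A, ∀ y ∈ s, G.Adj x y → y ∈ A) {a : V} (has : a ∈ s) (haA : a ∈ A) :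
    s ⊆ A := by
  intro b hbs
  by_contra hbA
  obtain ⟨p⟩ := hs ⟨a, has⟩ ⟨b, hbs⟩
  obtain ⟨d, -, hd₁, hd₂⟩ := p.exists_boundary_dart {x | x.1 ∈ A} haA hbA
  exact hd₂ (hA _ hd₁ _ d.snd.2 d.adj)

theorem exists_eq_pair_of_connected_induce {S : Set V} (hS : (G.induce S).Connected)
    (hfin : S.Finite) (hcard : S.ncard ≤ 2) : ∃ a b, S = {a, b} ∧ (a = b ∨ G.Adj a b) := by
  have hpos : 0 < S.ncard := (Set.ncard_pos hfin).2 (Set.nonempty_coe_sort.1 hS.nonempty)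
  obtain hone | htwo : S.ncard = 1 ∨ S.ncard = 2 := by omega
  · obtain ⟨a, rfl⟩ := Set.ncard_eq_one.1 hone
    exact ⟨a, a, Set.pair_eq_singleton a |>.symm, Or.inl rfl⟩
  · obtain ⟨a, b, hab, rfl⟩ := Set.ncard_eq_two.1 htwo
    refine ⟨a, b, rfl, Or.inr ?_⟩
    obtain ⟨p⟩ := hS.preconnected ⟨a, by simp⟩ ⟨b, by simp⟩
    cases p with
    | nil => exact absurd rfl hab
    | @cons _ c _ hac _ =>
      have hac' : G.Adj a c := hac
      obtain hca | hcb := c.2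
      · exact absurd (hca ▸ hac') G.irrefl
      · rwa [Set.mem_singleton_iff.1 hcb] at hac'

theorem nonempty_iso_completeBipartiteGraph_of_star {U : Type*} [Finite U]
    {H : SimpleGraph U} (c : U) {n : ℕ} (hn : Nat.card U = n + 1)
    (hadj : ∀ p q, H.Adj p q ↔ p ≠ q ∧ (p = c ∨ q = c)) :
    Nonempty (H ≃g completeBipartiteGraph (Fin 1) (Fin n)) := by
  classical
  have := Fintype.ofFinite U
  let leaf : Fin n ≃ {u // u ≠ c} := (Fintype.equivFinOfCardEq <| by
    rw [Fintype.card_subtype_compl, Fintype.card_subtype_eq, ← Nat.card_eq_fintype_card, hn,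
      Nat.add_sub_cancel]).symm
  let f : Fin 1 ⊕ Fin n → U := Sum.elim (fun _ => c) (fun i => leaf i)
  have hf : f.Injective := by
    rintro (i | i) (j | j) hij
    · exact congrArg Sum.inl (Subsingleton.elim i j)
    · exact absurd hij.symm (leaf j).2
    · exact absurd hij (leaf i).2
    · exact congrArg Sum.inr (leaf.injective (Subtype.ext hij))
  have hbij : f.Bijective := hf.bijective_of_nat_card_le <| by
    rw [hn, Nat.card_sum, Nat.card_eq_fintype_card, Nat.card_eq_fintype_card, Fintype.card_fin,
      Fintype.card_fin, add_comm]
  refine ⟨(⟨Equiv.ofBijective f hbij, ?_⟩ : completeBipartiteGraph (Fin 1) (Fin n) ≃g H).symm⟩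
  have hleaf : ∀ i, (leaf i : U) ≠ c := fun i => (leaf i).2
  have hleaf' : ∀ i, c ≠ leaf i := fun i => (hleaf i).symm
  rintro (i | i) (j | j) <;> simp [f, hadj, hleaf, hleaf']

end SimpleGraph

section Separation

variable {V : Type*} {G : SimpleGraph V} {G1 G2 : G.Subgraph}

namespace SimpleGraph.Subgraph

theorem adj_of_edgeSet_union_eq (hE : G1.edgeSet ∪ G2.edgeSet = G.edgeSet) {x y : V}
    (hx : x ∉ G2.verts) (hxy : G.Adj x y) : G1.Adj x y := by
  have hxy' : s(x, y) ∈ G1.edgeSet ∪ G2.edgeSet := hE ▸ hxy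
  rcases hxy' with h | h
  · exact h
  · exact absurd (G2.edge_vert h) hx

theorem subset_verts_diff_of_preconnected_induce (hE : G1.edgeSet ∪ G2.edgeSet = G.edgeSet)
    {s : Set V} (hs : (G.induce s).Preconnected) (hsX : Disjoint s (G1.verts ∩ G2.verts))
    {a : V} (has : a ∈ s) (ha : a ∈ G1.verts \ G2.verts) : s ⊆ G1.verts \ G2.verts := by
  refine G.subset_of_preconnected_induce hs (fun x hx y hys hxy => ?_) has ha
  have hy : y ∈ G1.verts := (adj_of_edgeSet_union_eq hE hx.2 hxy).snd_mem
  exact ⟨hy, fun hy₂ => hsX.notMem_of_mem_left hys ⟨hy, hy₂⟩⟩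

end SimpleGraph.Subgraph

theorem IsSep3.symm (h : IsSep3 G G1 G2) : IsSep3 G G2 G1 := by
  obtain ⟨hE, hV, hA, hB, hX⟩ := h
  exact ⟨by rwa [Set.union_comm], by rwa [Set.union_comm], hB, hA, by rwa [Set.inter_comm]⟩

theorem IsSep3.nonempty_iso_of_neighborSet_eq (h : IsSep3 G G1 G2) {v : V}
    (hv : v ∈ G1.verts \ G2.verts) (hN : G.neighborSet v = G1.verts ∩ G2.verts)
    (hind : G.IsIndepSet (G1.verts ∩ G2.verts))
    (hrest : (G.induce (insert v (G1.verts ∩ G2.verts))ᶜ).Preconnected) :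
    Nonempty (G1.coe ≃g completeBipartiteGraph (Fin 1) (Fin 3)) := by
  obtain ⟨hE, -, -, ⟨b, hb⟩, hX3⟩ := h
  set X := G1.verts ∩ G2.verts with hXdef
  have hvX : v ∉ X := fun hvX => hv.2 hvX.2
  have hrestB : (insert v X)ᶜ ⊆ G2.verts \ G1.verts := by
    refine Subgraph.subset_verts_diff_of_preconnected_induce (Set.union_comm _ _ ▸ hE) hrest
      ?_ ?_ hb
    · rw [Set.inter_comm, ← hXdef]
      exact (disjoint_compl_left (a := insert v X)).mono_right (Set.subset_insert v X)
    · rintro (rfl | hbX)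
      exacts [hb.2 hv.1, hb.2 hbX.1]
  have hverts : G1.verts = insert v X := by
    ext z
    refine ⟨fun hz => ?_, ?_⟩
    · by_contra hzX
      exact (hrestB hzX).2 hz
    · rintro (rfl | hz)
      exacts [hv.1, hz.1]
  have hcard : Nat.card G1.verts = 3 + 1 := by
    rw [Nat.card_coe_set_eq, hverts, Set.ncard_insert_of_notMem hvX
      (Set.finite_of_ncard_ne_zero (by rw [hX3]; decide)), hX3]
  have : Finite G1.verts := Nat.finite_of_card_ne_zero (by omega)
  refine SimpleGraph.nonempty_iso_completeBipartiteGraph_of_star ⟨v, hv.1⟩ hcard ?_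
  rintro ⟨p, hp⟩ ⟨q, hq⟩
  simp only [Subgraph.coe_adj, ne_eq, Subtype.mk.injEq]
  constructor
  · intro hpq
    refine ⟨(G1.adj_sub hpq).ne, ?_⟩
    by_contra! hpqv
    rw [hverts] at hp hq
    exact hind (hp.resolve_left hpqv.1) (hq.resolve_left hpqv.2) (G1.adj_sub hpq).ne
      (G1.adj_sub hpq)
  · rintro ⟨hpq, rfl | rfl⟩
    · have hqX : q ∈ X := (hverts ▸ hq).resolve_left (Ne.symm hpq)
      exact Subgraph.adj_of_edgeSet_union_eq hE hv.2 (by rw [← mem_neighborSet, hN]; exact hqX)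
    · have hpX : p ∈ X := (hverts ▸ hp).resolve_left hpq
      refine (Subgraph.adj_of_edgeSet_union_eq hE hv.2 ?_).symm
      rw [← mem_neighborSet, hN]
      exact hpX

theorem IsSep3.nonempty_iso_or_nonempty_iso (h : IsSep3 G G1 G2)
    (hX : (G.induce (G1.verts ∩ G2.verts)ᶜ).Preconnected ∨
      ∃ v, G.neighborSet v = G1.verts ∩ G2.verts ∧ G.IsIndepSet (G1.verts ∩ G2.verts) ∧
        (G.induce (insert v (G1.verts ∩ G2.verts))ᶜ).Preconnected) :
    Nonempty (G1.coe ≃g completeBipartiteGraph (Fin 1) (Fin 3)) ∨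
      Nonempty (G2.coe ≃g completeBipartiteGraph (Fin 1) (Fin 3)) := by
  obtain ⟨hE, hV, ⟨a, ha⟩, ⟨b, hb⟩, -⟩ := id h
  rcases hX with hconn | ⟨v, hN, hind, hrest⟩
  · have hA := Subgraph.subset_verts_diff_of_preconnected_induce hE hconn disjoint_compl_left
      (fun haX => ha.2 haX.2) ha
    exact absurd (hA fun hbX => hb.2 hbX.1).1 hb.2
  · have hvX : v ∉ G1.verts ∩ G2.verts := hN ▸ G.notMem_neighborSet_self
    have hv : v ∈ G1.verts ∪ G2.verts := hV ▸ Set.mem_univ v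
    by_cases hv₁ : v ∈ G1.verts
    · exact .inl (h.nonempty_iso_of_neighborSet_eq ⟨hv₁, fun hv₂ => hvX ⟨hv₁, hv₂⟩⟩ hN hind hrest)
    · rw [Set.inter_comm] at hN hind hrest
      exact .inr (h.symm.nonempty_iso_of_neighborSet_eq ⟨hv.resolve_left hv₁, hv₁⟩ hN hind hrest)

end Separation

section FloodFillCriteria

variable {V : Type*} [Fintype V] [DecidableEq V] {G : SimpleGraph V} [DecidableRel G.Adj]

theorem threeConnected_of_floodFills (hcard : 4 ≤ Fintype.card V)
    (h2 : ∀ F : Finset V, F.card ≤ 2 → G.FloodFills Fᶜ) : ThreeConnected G := by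
  refine ⟨Nat.card_eq_fintype_card (α := V) ▸ hcard, fun s hs => ?_⟩
  have hF := (Set.toFinite s).coe_toFinset
  rw [← hF, ← Finset.coe_compl]
  exact (h2 _ (by rwa [← Set.ncard_coe_finset, hF])).connected_induce

theorem IsSep3.nonempty_iso_of_floodFills
    (h3 : ∀ X : Finset V, X.card = 3 → G.FloodFills Xᶜ ∨
      ∃ v, G.neighborFinset v = X ∧ G.IsIndepSet X ∧ G.FloodFills (insert v X)ᶜ)
    {G1 G2 : G.Subgraph} (h : IsSep3 G G1 G2) :
    Nonempty (G1.coe ≃g completeBipartiteGraph (Fin 1) (Fin 3)) ∨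
      Nonempty (G2.coe ≃g completeBipartiteGraph (Fin 1) (Fin 3)) := by
  have hF := (Set.toFinite (G1.verts ∩ G2.verts)).coe_toFinset
  refine h.nonempty_iso_or_nonempty_iso ?_
  rw [← hF]
  rcases h3 _ (by rw [← Set.ncard_coe_finset, hF]; exact h.2.2.2.2) with hc | ⟨v, hN, hind, hc⟩
  · rw [← Finset.coe_compl]
    exact .inl hc.connected_induce.preconnected
  · refine .inr ⟨v, by rw [← coe_neighborFinset, hN], hind, ?_⟩
    rw [← Finset.coe_insert, ← Finset.coe_compl]
    exact hc.connected_induce.preconnected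

end FloodFillCriteria

namespace SimpleGraph

variable {V W : Type*} {G : SimpleGraph V} {H : SimpleGraph W}

def extNeighborSet (G : SimpleGraph V) (S : Set V) : Set V := {y | y ∉ S ∧ ∃ x ∈ S, G.Adj x y}

theorem IsMinorOf.exists_connected_ncard_neighborSet_le [Finite V] (h : H.IsMinorOf G) (w : W) :
    ∃ S : Set V, (G.induce S).Connected ∧ (H.neighborSet w).ncard ≤ (G.extNeighborSet S).ncard := by
  obtain ⟨B, hconn, hdisj, hadj⟩ := h
  refine ⟨B w, hconn w, ?_⟩
  have : Nonempty V := ⟨(hconn w).nonempty.some⟩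
  choose! x hx y hy hxy using fun w' (hw' : H.Adj w w') => hadj w w' hw'
  refine Set.ncard_le_ncard_of_injOn y (fun w' hw' => ⟨?_, x w', hx w' hw', hxy w' hw'⟩) ?_
    (Set.toFinite _)
  · exact (hdisj hw'.ne).notMem_of_mem_right (hy w' hw')
  · intro w₁ hw₁ w₂ hw₂ hy₁₂
    by_contra hne
    exact (hdisj hne).notMem_of_mem_left (hy w₁ hw₁) (hy₁₂ ▸ hy w₂ hw₂)

end SimpleGraph

namespace V8_13_24

-- The kernel decides adjacency from these lists much faster than from the edge-set definition.
def nbrs : Fin 8 → List (Fin 8) :=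
  ![[1, 7, 4, 2], [0, 2, 5, 3], [1, 3, 6, 0], [2, 4, 7, 1],
    [3, 5, 0], [4, 6, 1], [5, 7, 2], [6, 0, 3]]

theorem adj_iff_mem_nbrs (a b : Fin 8) : V8_13_24.Adj a b ↔ b ∈ nbrs a := by
  simp only [V8_13_24, V8, sup_adj, fromEdgeSet_adj, Set.mem_insert_iff, Set.mem_singleton_iff,
    Sym2.eq_iff]
  fin_cases a <;> fin_cases b <;> decide

instance : DecidableRel V8_13_24.Adj := fun a b => decidable_of_iff _ (adj_iff_mem_nbrs a b).symm

theorem floodFills_compl_of_card_le_two :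
    ∀ F : Finset (Fin 8), F.card ≤ 2 → V8_13_24.FloodFills Fᶜ := by
  decide +kernel

theorem floodFills_compl_or_eq_neighborFinset_of_card_eq_three :
    ∀ X : Finset (Fin 8), X.card = 3 → V8_13_24.FloodFills Xᶜ ∨
      ∃ v, V8_13_24.neighborFinset v = X ∧ V8_13_24.IsIndepSet X ∧
        V8_13_24.FloodFills (insert v X)ᶜ := by
  decide +kernel

theorem card_extNeighbors_pair_le_five : ∀ a b : Fin 8, a = b ∨ V8_13_24.Adj a b →
    ({y | y ≠ a ∧ y ≠ b ∧ (V8_13_24.Adj a y ∨ V8_13_24.Adj b y)} : Finset (Fin 8)).card ≤ 5 := by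
  decide +kernel

theorem ncard_extNeighborSet_le_five {S : Set (Fin 8)} (hS : (V8_13_24.induce S).Connected)
    (hcard : S.ncard ≤ 2) : (V8_13_24.extNeighborSet S).ncard ≤ 5 := by
  obtain ⟨a, b, rfl, hab⟩ := V8_13_24.exists_eq_pair_of_connected_induce hS (Set.toFinite S) hcard
  have hN : V8_13_24.extNeighborSet {a, b} =
      ↑({y | y ≠ a ∧ y ≠ b ∧ (V8_13_24.Adj a y ∨ V8_13_24.Adj b y)} : Finset (Fin 8)) := by
    ext y
    simp [extNeighborSet, and_assoc]
  rw [hN, Set.ncard_coe_finset]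
  exact card_extNeighbors_pair_le_five a b hab

end V8_13_24

theorem W6_ncard_neighborSet_zero : (W6.neighborSet 0).ncard = 6 := by
  have : W6.neighborSet 0 = {0}ᶜ := by
    ext x
    fin_cases x <;> simp [W6]
  rw [this, Set.ncard_eq_toFinset_card']
  rfl

theorem not_W6_isMinorOf_V8_13_24 : ¬ W6.IsMinorOf V8_13_24 := by
  intro h
  obtain ⟨S, hS, hN⟩ := h.exists_connected_ncard_neighborSet_le 0
  rw [W6_ncard_neighborSet_zero] at hN
  have hsum : S.ncard + (V8_13_24.extNeighborSet S).ncard ≤ 8 := by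
    rw [← Set.ncard_union_eq (Set.disjoint_left.2 fun y hyS hy => hy.1 hyS)]
    exact (Set.ncard_le_card _).trans_eq (Nat.card_fin 8)
  have := V8_13_24.ncard_extNeighborSet_le_five hS (by omega)
  omega

/-- `V₈ + 13 + 24` is internally 4-connected and `W₆`-minor-free. -/
theorem stmt19 : Internally4Connected V8_13_24 ∧ ¬ W6.IsMinorOf V8_13_24 :=
  ⟨⟨threeConnected_of_floodFills (by decide) V8_13_24.floodFills_compl_of_card_le_two, by simp,
    fun _ _ => IsSep3.nonempty_iso_of_floodFills
      V8_13_24.floodFills_compl_or_eq_neighborFinset_of_card_eq_three⟩,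
    not_W6_isMinorOf_V8_13_24⟩
end
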